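/- arXiv:2107.04694 — 4 statements merged into one kernel-verified Lean document; each statement's English description precedes it below -/
import Mathlib

section
/- Let D_S and D_T be probability measures on X × Y with X-marginals μ_S and μ_T respectively, and let h, h_S, h_T be hypotheses in ℋ. Suppose f(h(x), y), f(h_T(x), y), and all pseudo-risk integrands are measurable in the relevant variables. Then R(h, D_T) ≤ R'(h, h_S, μ_S) + Ψ(μ_S, μ_T) + ε, where ε = R(h_T, D_T) + R'(h_S, h_T, μ_S). (This is the paper's single-task domain-adaptation risk bound: the target risk of h is controlled by its source pseudo-risk, the discrepancy distance between the source and target marginals, and a combined error term.) -/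
open MeasureTheory

/-- The risk `R(h, D) = ∫ f(h(x), y) dD(x, y)` of hypothesis `h` for loss `f`
on a joint distribution `D` on `X × Y`. -/
noncomputable def risk {X Y : Type*} [MeasurableSpace X] [MeasurableSpace Y]
    (f : Y → Y → ℝ) (h : X → Y) (D : Measure (X × Y)) : ℝ :=
  ∫ p, f (h p.1) p.2 ∂D

/-- The pseudo-risk `R'(h, h', μ) = ∫ f(h(x), h'(x)) dμ(x)` between hypotheses
`h` and `h'` on an input marginal `μ`. -/
noncomputable def pseudoRisk {X Y : Type*} [MeasurableSpace X]
    (f : Y → Y → ℝ) (h h' : X → Y) (μ : Measure X) : ℝ :=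
  ∫ x, f (h x) (h' x) ∂μ

/-- The discrepancy distance
`Ψ(μ, ν) = sup_{h, h' ∈ ℋ} |R'(h, h', μ) − R'(h, h', ν)|`
between two input marginals `μ` and `ν`, over a hypothesis class `H`. -/
noncomputable def discrepancy {X Y : Type*} [MeasurableSpace X]
    (f : Y → Y → ℝ) (H : Set (X → Y)) (μ ν : Measure X) : ℝ :=
  sSup {r | ∃ h ∈ H, ∃ h' ∈ H, r = |pseudoRisk f h h' μ - pseudoRisk f h h' ν|}

private lemma aux_integrable_of_bdd {α : Type*} [MeasurableSpace α]
    (ν : MeasureTheory.Measure α) [MeasureTheory.IsFiniteMeasure ν] (M : ℝ)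
    (g : α → ℝ) (hg : Measurable g) (hg0 : ∀ a, 0 ≤ g a) (hgM : ∀ a, g a ≤ M) :
    MeasureTheory.Integrable g ν := by
  refine (MeasureTheory.integrable_const M).mono' hg.aestronglyMeasurable ?_
  filter_upwards with a
  rw [Real.norm_eq_abs, abs_of_nonneg (hg0 a)]
  exact hgM a

/-- **Single-task domain-adaptation risk bound.** For source and target joint
distributions `D_S`, `D_T` with `X`-marginals `μ_S`, `μ_T`, and hypotheses
`h, h_S, h_T ∈ ℋ`, we have
`R(h, D_T) ≤ R'(h, h_S, μ_S) + Ψ(μ_S, μ_T) + ε`, where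
`ε = R(h_T, D_T) + R'(h_S, h_T, μ_S)`. -/
theorem domain_adaptation_risk_bound
    {X Y : Type*} [MeasurableSpace X] [MeasurableSpace Y]
    (f : Y → Y → ℝ) (M : ℝ) (hM : 0 < M)
    (hf_meas : Measurable (Function.uncurry f))
    (hf_nonneg : ∀ y y', 0 ≤ f y y') (hf_bdd : ∀ y y', f y y' ≤ M)
    (hf_tri : ∀ y y' y'', f y y'' ≤ f y y' + f y' y'')
    (H : Set (X → Y)) (hH_meas : ∀ g ∈ H, Measurable g)
    (D_S D_T : Measure (X × Y)) [IsProbabilityMeasure D_S] [IsProbabilityMeasure D_T]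
    (μ_S μ_T : Measure X) (hμ_S : μ_S = D_S.map Prod.fst) (hμ_T : μ_T = D_T.map Prod.fst)
    (h h_S h_T : X → Y) (hh : h ∈ H) (hh_S : h_S ∈ H) (hh_T : h_T ∈ H) :
    risk f h D_T ≤
      pseudoRisk f h h_S μ_S + discrepancy f H μ_S μ_T +
        (risk f h_T D_T + pseudoRisk f h_S h_T μ_S) := by
  have hh_m := hH_meas h hh
  have hhS_m := hH_meas h_S hh_S
  have hhT_m := hH_meas h_T hh_T
  have hPS : IsProbabilityMeasure μ_S := by
    rw [hμ_S]; exact Measure.isProbabilityMeasure_map measurable_fst.aemeasurable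
  have hPT : IsProbabilityMeasure μ_T := by
    rw [hμ_T]; exact Measure.isProbabilityMeasure_map measurable_fst.aemeasurable
  have hmeas : ∀ g g' : X → Y, Measurable g → Measurable g' →
      Measurable (fun x => f (g x) (g' x)) := fun g g' hg hg' =>
    hf_meas.comp (hg.prodMk hg')
  have hint : ∀ (μ : Measure X) [IsProbabilityMeasure μ] (g g' : X → Y),
      Measurable g → Measurable g' → Integrable (fun x => f (g x) (g' x)) μ := by
    intro μ _ g g' hg hg'
    exact aux_integrable_of_bdd μ M _ (hmeas g g' hg hg') (fun a => hf_nonneg _ _) (fun a => hf_bdd _ _)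
  -- pseudo-risk bounds
  have hpr_bd : ∀ (μ : Measure X) [IsProbabilityMeasure μ], ∀ g ∈ H, ∀ g' ∈ H,
      0 ≤ pseudoRisk f g g' μ ∧ pseudoRisk f g g' μ ≤ M := by
    intro μ _ g hg g' hg'
    constructor
    · exact integral_nonneg fun x => hf_nonneg _ _
    · calc pseudoRisk f g g' μ ≤ ∫ _x, M ∂μ :=
            integral_mono (hint μ g g' (hH_meas g hg) (hH_meas g' hg'))
              (integrable_const M) (fun x => hf_bdd _ _)
        _ = M := by simp
  -- the discrepancy set is bounded above
  have hBdd : BddAbove {r | ∃ g ∈ H, ∃ g' ∈ H,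
      r = |pseudoRisk f g g' μ_S - pseudoRisk f g g' μ_T|} := by
    refine ⟨M, ?_⟩
    rintro r ⟨g, hg, g', hg', rfl⟩
    obtain ⟨hS0, hSM⟩ := hpr_bd μ_S g hg g' hg'
    obtain ⟨hT0, hTM⟩ := hpr_bd μ_T g hg g' hg'
    rw [abs_sub_le_iff]; constructor <;> linarith
  -- step 1: risk f h D_T ≤ pseudoRisk f h h_T μ_T + risk f h_T D_T
  have step1 : risk f h D_T ≤ pseudoRisk f h h_T μ_T + risk f h_T D_T := by
    have hfst : Measurable (fun p : X × Y => p.1) := measurable_fst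
    have hsnd : Measurable (fun p : X × Y => p.2) := measurable_snd
    have hm1 : Measurable (fun p : X × Y => f (h p.1) (h_T p.1)) :=
      hf_meas.comp ((hh_m.comp hfst).prodMk (hhT_m.comp hfst))
    have hm2 : Measurable (fun p : X × Y => f (h_T p.1) p.2) :=
      hf_meas.comp ((hhT_m.comp hfst).prodMk hsnd)
    have hm0 : Measurable (fun p : X × Y => f (h p.1) p.2) :=
      hf_meas.comp ((hh_m.comp hfst).prodMk hsnd)
    have hi1 : Integrable (fun p : X × Y => f (h p.1) (h_T p.1)) D_T :=
      aux_integrable_of_bdd D_T M _ hm1 (fun a => hf_nonneg _ _) (fun a => hf_bdd _ _)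
    have hi2 : Integrable (fun p : X × Y => f (h_T p.1) p.2) D_T :=
      aux_integrable_of_bdd D_T M _ hm2 (fun a => hf_nonneg _ _) (fun a => hf_bdd _ _)
    have key : risk f h D_T ≤ (∫ p : X × Y, f (h p.1) (h_T p.1) ∂D_T) + risk f h_T D_T := by
      rw [risk, risk, ← integral_add hi1 hi2]
      exact integral_mono (aux_integrable_of_bdd D_T M _ hm0 (fun a => hf_nonneg _ _) (fun a => hf_bdd _ _))
        (hi1.add hi2) (fun p => hf_tri _ _ _)
    have heq : (∫ p : X × Y, f (h p.1) (h_T p.1) ∂D_T) = pseudoRisk f h h_T μ_T := by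
      rw [pseudoRisk, hμ_T,
        integral_map measurable_fst.aemeasurable (hmeas h h_T hh_m hhT_m).aestronglyMeasurable]
    linarith [key, heq]
  -- step 2: pseudoRisk f h h_T μ_T ≤ pseudoRisk f h h_T μ_S + discrepancy
  have step2 : pseudoRisk f h h_T μ_T ≤ pseudoRisk f h h_T μ_S + discrepancy f H μ_S μ_T := by
    have hmem : |pseudoRisk f h h_T μ_S - pseudoRisk f h h_T μ_T| ≤ discrepancy f H μ_S μ_T :=
      le_csSup hBdd ⟨h, hh, h_T, hh_T, rfl⟩
    have := abs_sub_abs_le_abs_sub (pseudoRisk f h h_T μ_S) (pseudoRisk f h h_T μ_T)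
    have h1 : pseudoRisk f h h_T μ_T - pseudoRisk f h h_T μ_S ≤
        |pseudoRisk f h h_T μ_S - pseudoRisk f h h_T μ_T| := by
      rw [abs_sub_comm]; exact le_abs_self _
    linarith
  -- step 3: triangle on μ_S
  have step3 : pseudoRisk f h h_T μ_S ≤ pseudoRisk f h h_S μ_S + pseudoRisk f h_S h_T μ_S := by
    rw [pseudoRisk, pseudoRisk, pseudoRisk, ← integral_add (hint μ_S h h_S hh_m hhS_m)
      (hint μ_S h_S h_T hhS_m hhT_m)]
    exact integral_mono (hint μ_S h h_T hh_m hhT_m)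
      ((hint μ_S h h_S hh_m hhS_m).add (hint μ_S h_S h_T hhS_m hhT_m)) (fun x => hf_tri _ _ _)
  linarith
end

section
/- Let n ≥ 1, let D_0, D_1, …, D_n be probability measures on X × Y with X-marginals μ_0, μ_1, …, μ_n, and let g_0, g_1, …, g_n ∈ ℋ be hypotheses such that for each 0 ≤ c ≤ n−1, the label equals the hypothesis output D_c-almost surely, i.e. y = g_c(x) for D_c-almost every (x,y) (so that R(h, D_c) = R'(h, g_c, μ_c) for every hypothesis h). Suppose all loss integrands are measurable. Then for every hypothesis h ∈ ℋ: R(h, D_n) ≤ R'(h, g_0, μ_0) + Σ_{c=0}^{n−1} ( Ψ(μ_c, μ_{c+1}) + ε_c ), where ε_c = R(g_c, D_{c+1}) + R'(g_c, g_{c+1}, μ_c). (This is the paper's accumulated-forgetting bound: when a generative-replay model relearns its own generated data distribution through a chain of n retraining generations, the risk on the final generated distribution is bounded by the initial pseudo-risk plus the sum over generations of the discrepancy distances and combined error terms.) -/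
open MeasureTheory

private lemma integrable_of_bdd' {α : Type*} [MeasurableSpace α] {M : ℝ}
    (ν : Measure α) [IsProbabilityMeasure ν] (φ : α → ℝ) (hφ : Measurable φ)
    (h0 : ∀ a, 0 ≤ φ a) (hMb : ∀ a, φ a ≤ M) : Integrable φ ν := by
  refine ⟨hφ.aestronglyMeasurable, ?_⟩
  apply HasFiniteIntegral.of_bounded (C := M)
  filter_upwards with a
  rw [Real.norm_eq_abs, abs_of_nonneg (h0 a)]
  exact hMb a

/-- **Accumulated-forgetting bound (Theorem 3).** If a generative-replay model
relearns its own generated data through a chain of distributions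
`D_0, D_1, …, D_n` with `X`-marginals `μ_0, …, μ_n` and labeling hypotheses
`g_0, …, g_n` (so that `y = g_c(x)` for `D_c`-almost every `(x, y)` when
`c < n`), then for every hypothesis `h ∈ ℋ`:
`R(h, D_n) ≤ R'(h, g_0, μ_0) + ∑_{c=0}^{n−1} (Ψ(μ_c, μ_{c+1}) + ε_c)`,
where `ε_c = R(g_c, D_{c+1}) + R'(g_c, g_{c+1}, μ_c)`. -/
theorem accumulated_forgetting_bound
    {X Y : Type*} [MeasurableSpace X] [MeasurableSpace Y]
    (f : Y → Y → ℝ) (M : ℝ) (hM : 0 < M)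
    (hf_meas : Measurable (Function.uncurry f))
    (hf_nonneg : ∀ y y', 0 ≤ f y y') (hf_bdd : ∀ y y', f y y' ≤ M)
    (hf_tri : ∀ y y' y'', f y y'' ≤ f y y' + f y' y'')
    (H : Set (X → Y)) (hH_meas : ∀ g ∈ H, Measurable g)
    (n : ℕ) (hn : 1 ≤ n)
    (D : ℕ → Measure (X × Y)) (hD_prob : ∀ c ≤ n, IsProbabilityMeasure (D c))
    (μ : ℕ → Measure X) (hμ : ∀ c ≤ n, μ c = (D c).map Prod.fst)
    (g : ℕ → X → Y) (hg : ∀ c ≤ n, g c ∈ H)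
    (hlabel : ∀ c < n, ∀ᵐ p ∂(D c), p.2 = g c p.1)
    (h : X → Y) (hh : h ∈ H) :
    risk f h (D n) ≤
      pseudoRisk f h (g 0) (μ 0) +
        ∑ c ∈ Finset.range n,
          (discrepancy f H (μ c) (μ (c + 1)) +
            (risk f (g c) (D (c + 1)) + pseudoRisk f (g c) (g (c + 1)) (μ c))) := by
  have hμprob : ∀ c ≤ n, IsProbabilityMeasure (μ c) := by
    intro c hc
    rw [hμ c hc]
    have := hD_prob c hc
    exact Measure.isProbabilityMeasure_map measurable_fst.aemeasurable
  -- pseudoRisk on μ c equals integral over D c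
  have hPR : ∀ c ≤ n, ∀ h₁ h₂ : X → Y, Measurable h₁ → Measurable h₂ →
      pseudoRisk f h₁ h₂ (μ c) = ∫ p, f (h₁ p.1) (h₂ p.1) ∂(D c) := by
    intro c hc h₁ h₂ m₁ m₂
    rw [pseudoRisk, hμ c hc]
    exact integral_map measurable_fst.aemeasurable
      (show Measurable fun x => f (h₁ x) (h₂ x) from
        hf_meas.comp (m₁.prodMk m₂)).aestronglyMeasurable
  -- risk equals pseudoRisk when labels match a.e.
  have hRP : ∀ c < n, ∀ h₁ : X → Y, Measurable h₁ →
      risk f h₁ (D c) = pseudoRisk f h₁ (g c) (μ c) := by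
    intro c hc h₁ m₁
    rw [hPR c (le_of_lt hc) h₁ (g c) m₁ (hH_meas _ (hg c (le_of_lt hc)))]
    exact integral_congr_ae ((hlabel c hc).mono fun p hp => by
      show f (h₁ p.1) p.2 = f (h₁ p.1) (g c p.1)
      rw [hp])
  -- pseudoRisk nonneg and bounded by M
  have hPRnonneg : ∀ (h₁ h₂ : X → Y) (ν : Measure X), 0 ≤ pseudoRisk f h₁ h₂ ν := by
    intro h₁ h₂ ν
    exact integral_nonneg fun x => hf_nonneg _ _
  have hPRle : ∀ c ≤ n, ∀ h₁ h₂ : X → Y, pseudoRisk f h₁ h₂ (μ c) ≤ M := by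
    intro c hc h₁ h₂
    have := hμprob c hc
    calc pseudoRisk f h₁ h₂ (μ c) ≤ ∫ _, M ∂(μ c) := by
          refine integral_mono_of_nonneg (Filter.Eventually.of_forall fun x => hf_nonneg _ _)
            (integrable_const M) (Filter.Eventually.of_forall fun x => hf_bdd _ _)
      _ = M := by simp
  -- discrepancy bound
  have hdisc : ∀ c, c + 1 ≤ n → ∀ h₁ ∈ H, ∀ h₂ ∈ H,
      pseudoRisk f h₁ h₂ (μ (c + 1)) - pseudoRisk f h₁ h₂ (μ c) ≤
        discrepancy f H (μ c) (μ (c + 1)) := by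
    intro c hc h₁ hh₁ h₂ hh₂
    have hmem : |pseudoRisk f h₁ h₂ (μ c) - pseudoRisk f h₁ h₂ (μ (c + 1))| ∈
        {r | ∃ a ∈ H, ∃ b ∈ H, r = |pseudoRisk f a b (μ c) - pseudoRisk f a b (μ (c + 1))|} :=
      ⟨h₁, hh₁, h₂, hh₂, rfl⟩
    have hbdd : BddAbove
        {r | ∃ a ∈ H, ∃ b ∈ H, r = |pseudoRisk f a b (μ c) - pseudoRisk f a b (μ (c + 1))|} := by
      refine ⟨M, fun r hr => ?_⟩
      obtain ⟨a, ha, b, hb, rfl⟩ := hr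
      rw [abs_sub_le_iff]
      constructor
      · linarith [hPRle c (by omega) a b, hPRnonneg a b (μ (c + 1))]
      · linarith [hPRle (c + 1) hc a b, hPRnonneg a b (μ c)]
    calc pseudoRisk f h₁ h₂ (μ (c + 1)) - pseudoRisk f h₁ h₂ (μ c)
        ≤ |pseudoRisk f h₁ h₂ (μ c) - pseudoRisk f h₁ h₂ (μ (c + 1))| := by
          rw [abs_sub_comm]; exact le_abs_self _
      _ ≤ _ := le_csSup hbdd hmem
  -- triangle step: risk f h' (D (c+1)) ≤ pseudoRisk f h' (g c) (μ (c+1)) + risk f (g c) (D (c+1))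
  have hstep : ∀ c, c + 1 ≤ n →
      risk f h (D (c + 1)) ≤ pseudoRisk f h (g c) (μ (c + 1)) + risk f (g c) (D (c + 1)) := by
    intro c hc
    have hgc : Measurable (g c) := hH_meas _ (hg c (by omega))
    have hhm : Measurable h := hH_meas _ hh
    have := hD_prob (c + 1) hc
    have I1 : Integrable (fun p : X × Y => f (h p.1) (g c p.1)) (D (c + 1)) :=
      integrable_of_bdd' (M := M) _ _
        (hf_meas.comp ((hhm.comp measurable_fst).prodMk (hgc.comp measurable_fst)))
        (fun p => hf_nonneg _ _) (fun p => hf_bdd _ _)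
    have I2 : Integrable (fun p : X × Y => f (g c p.1) p.2) (D (c + 1)) :=
      integrable_of_bdd' (M := M) _ _
        (hf_meas.comp ((hgc.comp measurable_fst).prodMk measurable_snd))
        (fun p => hf_nonneg _ _) (fun p => hf_bdd _ _)
    calc risk f h (D (c + 1))
        ≤ ∫ p, (f (h p.1) (g c p.1) + f (g c p.1) p.2) ∂(D (c + 1)) :=
          integral_mono_of_nonneg (Filter.Eventually.of_forall fun p => hf_nonneg _ _)
            (I1.add I2) (Filter.Eventually.of_forall fun p => hf_tri _ _ _)
      _ = (∫ p, f (h p.1) (g c p.1) ∂(D (c + 1))) + ∫ p, f (g c p.1) p.2 ∂(D (c + 1)) :=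
          integral_add I1 I2
      _ = pseudoRisk f h (g c) (μ (c + 1)) + risk f (g c) (D (c + 1)) := by
          rw [hPR (c + 1) hc h (g c) hhm hgc]; rfl
  -- main induction
  have main : ∀ c ≤ n, risk f h (D c) ≤
      pseudoRisk f h (g 0) (μ 0) +
        ∑ i ∈ Finset.range c,
          (discrepancy f H (μ i) (μ (i + 1)) +
            (risk f (g i) (D (i + 1)) + pseudoRisk f (g i) (g (i + 1)) (μ i))) := by
    intro c
    induction c with
    | zero =>
      intro _
      rw [hRP 0 (by omega) h (hH_meas _ hh)]
      simp
    | succ c ih =>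
      intro hc
      have hc' : c ≤ n := by omega
      have h1 := hstep c hc
      have h2 := hdisc c hc h hh (g c) (hg c hc')
      have h3 : pseudoRisk f h (g c) (μ c) ≤ risk f h (D c) := by
        rw [hRP c (by omega) h (hH_meas _ hh)]
      have h4 := ih hc'
      have h5 := hPRnonneg (g c) (g (c + 1)) (μ c)
      rw [Finset.sum_range_succ]
      linarith
  exact main n le_rfl
end

section
/- Let t ≥ 1 and, for each task j = 1, …, t, let n_j ≥ 1 and let D_{j,0}, …, D_{j,n_j} be probability measures on X × Y with X-marginals μ_{j,0}, …, μ_{j,n_j}, together with hypotheses g_{j,0}, …, g_{j,n_j} ∈ ℋ such that for each 0 ≤ c ≤ n_j − 1 the label equals the hypothesis output D_{j,c}-almost surely: y = g_{j,c}(x) for D_{j,c}-almost every (x,y). Suppose all loss integrands are measurable. Then for every hypothesis h ∈ ℋ: Σ_{j=1}^{t} R(h, D_{j,n_j}) ≤ Σ_{j=1}^{t} ( R'(h, g_{j,0}, μ_{j,0}) + Σ_{c=0}^{n_j−1} ( Ψ(μ_{j,c}, μ_{j,c+1}) + ε_{j,c} ) ), where ε_{j,c} = R(g_{j,c}, D_{j,c+1})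 + R'(g_{j,c}, g_{j,c+1}, μ_{j,c}). (This is the paper's bound on the accumulated risk over all tasks learned during lifelong learning with generative replay: the total risk is bounded by summing the per-task accumulated-forgetting bounds.) -/
open MeasureTheory

section LLGRHelpers

variable {X Y : Type*} [MeasurableSpace X] [MeasurableSpace Y]
  {f : Y → Y → ℝ} {M : ℝ}

lemma llgr_meas_pair (hf_meas : Measurable (Function.uncurry f))
    {h h' : X → Y} (hh : Measurable h) (hh' : Measurable h') :
    Measurable fun x => f (h x) (h' x) :=
  hf_meas.comp (hh.prodMk hh')

lemma llgr_meas_joint (hf_meas : Measurable (Function.uncurry f))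
    {h : X → Y} (hh : Measurable h) :
    Measurable fun p : X × Y => f (h p.1) p.2 :=
  hf_meas.comp ((hh.comp measurable_fst).prodMk measurable_snd)

lemma llgr_integrable {α : Type*} [MeasurableSpace α] (ρ : Measure α)
    [IsFiniteMeasure ρ] {φ : α → ℝ} (hφ : Measurable φ)
    (h0 : ∀ a, 0 ≤ φ a) (hMb : ∀ a, φ a ≤ M) : Integrable φ ρ := by
  refine ⟨hφ.aestronglyMeasurable, ?_⟩
  refine HasFiniteIntegral.of_bounded (C := M) ?_
  filter_upwards with a
  rw [Real.norm_eq_abs, abs_of_nonneg (h0 a)]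
  exact hMb a

lemma llgr_pr_nonneg (hf_nonneg : ∀ y y', 0 ≤ f y y')
    (h h' : X → Y) (μ : Measure X) : 0 ≤ pseudoRisk f h h' μ :=
  integral_nonneg fun x => hf_nonneg _ _

lemma llgr_risk_nonneg (hf_nonneg : ∀ y y', 0 ≤ f y y')
    (h : X → Y) (D : Measure (X × Y)) : 0 ≤ risk f h D :=
  integral_nonneg fun p => hf_nonneg _ _

lemma llgr_pr_le_M (hf_meas : Measurable (Function.uncurry f))
    (hf_nonneg : ∀ y y', 0 ≤ f y y') (hf_bdd : ∀ y y', f y y' ≤ M)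
    {h h' : X → Y} (hh : Measurable h) (hh' : Measurable h')
    (μ : Measure X) [IsProbabilityMeasure μ] : pseudoRisk f h h' μ ≤ M := by
  have := integral_mono
    (llgr_integrable μ (llgr_meas_pair hf_meas hh hh')
      (fun x => hf_nonneg _ _) (fun x => hf_bdd _ _))
    (integrable_const M) (fun x => hf_bdd (h x) (h' x))
  simpa [pseudoRisk] using this

/-- Change of marginal estimated by the discrepancy. -/
lemma llgr_pr_discrepancy (hf_meas : Measurable (Function.uncurry f))
    (hf_nonneg : ∀ y y', 0 ≤ f y y') (hf_bdd : ∀ y y', f y y' ≤ M)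
    (H : Set (X → Y)) (hH_meas : ∀ g ∈ H, Measurable g)
    {h h' : X → Y} (hh : h ∈ H) (hh' : h' ∈ H)
    (μ ν : Measure X) [IsProbabilityMeasure μ] [IsProbabilityMeasure ν] :
    pseudoRisk f h h' ν ≤ pseudoRisk f h h' μ + discrepancy f H μ ν := by
  have hbdd : BddAbove {r | ∃ h ∈ H, ∃ h' ∈ H,
      r = |pseudoRisk f h h' μ - pseudoRisk f h h' ν|} := by
    refine ⟨M, ?_⟩
    rintro r ⟨a, ha, b, hb, rfl⟩
    have h1 : pseudoRisk f a b μ ≤ M :=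
      llgr_pr_le_M hf_meas hf_nonneg hf_bdd (hH_meas a ha) (hH_meas b hb) μ
    have h2 : pseudoRisk f a b ν ≤ M :=
      llgr_pr_le_M hf_meas hf_nonneg hf_bdd (hH_meas a ha) (hH_meas b hb) ν
    have h3 : 0 ≤ pseudoRisk f a b μ := llgr_pr_nonneg hf_nonneg _ _ _
    have h4 : 0 ≤ pseudoRisk f a b ν := llgr_pr_nonneg hf_nonneg _ _ _
    rw [abs_sub_le_iff]
    constructor <;> linarith
  have hmem : |pseudoRisk f h h' μ - pseudoRisk f h h' ν| ∈
      {r | ∃ h ∈ H, ∃ h' ∈ H, r = |pseudoRisk f h h' μ - pseudoRisk f h h' ν|} :=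
    ⟨h, hh, h', hh', rfl⟩
  have hle : |pseudoRisk f h h' μ - pseudoRisk f h h' ν| ≤ discrepancy f H μ ν :=
    le_csSup hbdd hmem
  have : pseudoRisk f h h' ν - pseudoRisk f h h' μ ≤ discrepancy f H μ ν :=
    le_trans (le_trans (le_abs_self _) (by rw [abs_sub_comm])) hle
  linarith

/-- When labels agree a.e. with `g`, the risk equals the pseudo-risk on the
marginal. -/
lemma llgr_risk_eq_pr (hf_meas : Measurable (Function.uncurry f))
    {h' g : X → Y} (hh' : Measurable h') (hg : Measurable g)
    (D : Measure (X × Y)) (hlabel : ∀ᵐ p ∂D, p.2 = g p.1) :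
    risk f h' D = pseudoRisk f h' g (D.map Prod.fst) := by
  have h1 : risk f h' D = ∫ p, f (h' p.1) (g p.1) ∂D := by
    refine integral_congr_ae ?_
    filter_upwards [hlabel] with p hp
    rw [hp]
  have h2 : pseudoRisk f h' g (D.map Prod.fst) = ∫ p, f (h' p.1) (g p.1) ∂D := by
    rw [pseudoRisk, integral_map measurable_fst.aemeasurable
      (llgr_meas_pair hf_meas hh' hg).aestronglyMeasurable]
  rw [h1, h2]

/-- Triangle inequality for risk via an intermediate labeling hypothesis. -/
lemma llgr_risk_triangle (hf_meas : Measurable (Function.uncurry f))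
    (hf_nonneg : ∀ y y', 0 ≤ f y y') (hf_bdd : ∀ y y', f y y' ≤ M)
    (hf_tri : ∀ y y' y'', f y y'' ≤ f y y' + f y' y'')
    {h' g : X → Y} (hh' : Measurable h') (hg : Measurable g)
    (D : Measure (X × Y)) [IsProbabilityMeasure D] :
    risk f h' D ≤ pseudoRisk f h' g (D.map Prod.fst) + risk f g D := by
  have hint1 : Integrable (fun p : X × Y => f (h' p.1) (g p.1)) D :=
    llgr_integrable D (llgr_meas_pair hf_meas hh' hg |>.comp measurable_fst)
      (fun p => hf_nonneg _ _) (fun p => hf_bdd _ _)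
  have hint2 : Integrable (fun p : X × Y => f (g p.1) p.2) D :=
    llgr_integrable D (llgr_meas_joint hf_meas hg)
      (fun p => hf_nonneg _ _) (fun p => hf_bdd _ _)
  have hint0 : Integrable (fun p : X × Y => f (h' p.1) p.2) D :=
    llgr_integrable D (llgr_meas_joint hf_meas hh')
      (fun p => hf_nonneg _ _) (fun p => hf_bdd _ _)
  have hmono : risk f h' D ≤ ∫ p, (f (h' p.1) (g p.1) + f (g p.1) p.2) ∂D :=
    integral_mono hint0 (hint1.add hint2) (fun p => hf_tri _ _ _)
  have hmap : pseudoRisk f h' g (D.map Prod.fst) = ∫ p, f (h' p.1) (g p.1) ∂D := by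
    rw [pseudoRisk, integral_map measurable_fst.aemeasurable
      (llgr_meas_pair hf_meas hh' hg).aestronglyMeasurable]
  rw [integral_add hint1 hint2] at hmono
  rw [hmap]
  exact hmono

end LLGRHelpers

/-- **Accumulated risk over all tasks in lifelong learning with generative
replay.** For each task `j = 1, …, t` with replay chain
`D_{j,0}, …, D_{j,n_j}` (marginals `μ_{j,0}, …, μ_{j,n_j}`, labeling
hypotheses `g_{j,0}, …, g_{j,n_j}`, with `y = g_{j,c}(x)` `D_{j,c}`-a.e. for
`c < n_j`), the total risk of any `h ∈ ℋ` satisfies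
`∑_j R(h, D_{j,n_j}) ≤
  ∑_j (R'(h, g_{j,0}, μ_{j,0}) + ∑_{c<n_j} (Ψ(μ_{j,c}, μ_{j,c+1}) + ε_{j,c}))`
where `ε_{j,c} = R(g_{j,c}, D_{j,c+1}) + R'(g_{j,c}, g_{j,c+1}, μ_{j,c})`. -/
theorem accumulated_risk_all_tasks_bound
    {X Y : Type*} [MeasurableSpace X] [MeasurableSpace Y]
    (f : Y → Y → ℝ) (M : ℝ) (hM : 0 < M)
    (hf_meas : Measurable (Function.uncurry f))
    (hf_nonneg : ∀ y y', 0 ≤ f y y') (hf_bdd : ∀ y y', f y y' ≤ M)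
    (hf_tri : ∀ y y' y'', f y y'' ≤ f y y' + f y' y'')
    (H : Set (X → Y)) (hH_meas : ∀ g ∈ H, Measurable g)
    (t : ℕ) (ht : 1 ≤ t)
    (n : ℕ → ℕ) (hn : ∀ j ∈ Finset.Icc 1 t, 1 ≤ n j)
    (D : ℕ → ℕ → Measure (X × Y))
    (hD_prob : ∀ j ∈ Finset.Icc 1 t, ∀ c ≤ n j, IsProbabilityMeasure (D j c))
    (μ : ℕ → ℕ → Measure X)
    (hμ : ∀ j ∈ Finset.Icc 1 t, ∀ c ≤ n j, μ j c = (D j c).map Prod.fst)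
    (g : ℕ → ℕ → X → Y) (hg : ∀ j ∈ Finset.Icc 1 t, ∀ c ≤ n j, g j c ∈ H)
    (hlabel : ∀ j ∈ Finset.Icc 1 t, ∀ c < n j, ∀ᵐ p ∂(D j c), p.2 = g j c p.1)
    (h : X → Y) (hh : h ∈ H) :
    ∑ j ∈ Finset.Icc 1 t, risk f h (D j (n j)) ≤
      ∑ j ∈ Finset.Icc 1 t,
        (pseudoRisk f h (g j 0) (μ j 0) +
          ∑ c ∈ Finset.range (n j),
            (discrepancy f H (μ j c) (μ j (c + 1)) +
              (risk f (g j c) (D j (c + 1)) +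
                pseudoRisk f (g j c) (g j (c + 1)) (μ j c)))) := by
  refine Finset.sum_le_sum ?_
  intro j hj
  have hh_meas : Measurable h := hH_meas h hh
  -- probability measure instances
  have hDp : ∀ c ≤ n j, IsProbabilityMeasure (D j c) := hD_prob j hj
  have hμp : ∀ c ≤ n j, IsProbabilityMeasure (μ j c) := by
    intro c hc
    rw [hμ j hj c hc]
    haveI := hDp c hc
    exact Measure.isProbabilityMeasure_map measurable_fst.aemeasurable
  -- key one-step estimate: for c < n j,
  -- R(h, D_{c+1}) ≤ R'(h, g_c, μ_c) + Ψ(μ_c, μ_{c+1}) + R(g_c, D_{c+1})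
  have step : ∀ c < n j,
      risk f h (D j (c + 1)) ≤
        pseudoRisk f h (g j c) (μ j c) +
          discrepancy f H (μ j c) (μ j (c + 1)) +
          risk f (g j c) (D j (c + 1)) := by
    intro c hc
    have hc1 : c + 1 ≤ n j := hc
    have hcle : c ≤ n j := le_of_lt hc
    haveI := hDp (c + 1) hc1
    haveI := hμp c hcle
    haveI := hμp (c + 1) hc1
    have hgc := hg j hj c hcle
    have hgc_meas := hH_meas _ hgc
    have tri := llgr_risk_triangle (M := M) hf_meas hf_nonneg hf_bdd hf_tri
      hh_meas hgc_meas (D j (c + 1))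
    rw [← hμ j hj (c + 1) hc1] at tri
    have disc := llgr_pr_discrepancy (M := M) hf_meas hf_nonneg hf_bdd H hH_meas
      hh hgc (μ j c) (μ j (c + 1))
    linarith
  -- induction: for all m with 1 ≤ m ≤ n j,
  -- R(h, D_m) ≤ R'(h, g_0, μ_0) + ∑_{c<m} (Ψ_c + ε_c)
  have main : ∀ m, 1 ≤ m → m ≤ n j →
      risk f h (D j m) ≤
        pseudoRisk f h (g j 0) (μ j 0) +
          ∑ c ∈ Finset.range m,
            (discrepancy f H (μ j c) (μ j (c + 1)) +
              (risk f (g j c) (D j (c + 1)) +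
                pseudoRisk f (g j c) (g j (c + 1)) (μ j c))) := by
    intro m hm
    induction m, hm using Nat.le_induction with
    | base =>
      intro h1
      have h0lt : 0 < n j := by omega
      have := step 0 h0lt
      have hε : 0 ≤ pseudoRisk f (g j 0) (g j 1) (μ j 0) :=
        llgr_pr_nonneg hf_nonneg _ _ _
      simp only [Finset.range_one, Finset.sum_singleton]
      linarith
    | succ m hm ih =>
      intro hmn
      have hmlt : m < n j := hmn
      have hml : m ≤ n j := le_of_lt hmlt
      have := step m hmlt
      -- R'(h, g_m, μ_m) = R(h, D_m)
      have heq : risk f h (D j m) = pseudoRisk f h (g j m) (μ j m) := by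
        rw [hμ j hj m hml]
        exact llgr_risk_eq_pr hf_meas hh_meas (hH_meas _ (hg j hj m hml))
          (D j m) (hlabel j hj m hmlt)
      have ihm := ih hml
      have hε : 0 ≤ pseudoRisk f (g j m) (g j (m + 1)) (μ j m) :=
        llgr_pr_nonneg hf_nonneg _ _ _
      rw [Finset.sum_range_succ]
      linarith
  exact main (n j) (hn j hj) le_rfl
end

section
/- Let t ≥ 1 and, for each task c = 1, …, t, let D_c and D̃_c be probability measures on X × Y with X-marginals μ_c and μ̃_c respectively, and let g_c ∈ ℋ be a hypothesis such that the label equals the hypothesis output D_c-almost surely: y = g_c(x) for D_c-almost every (x,y). Suppose all loss integrands are measurable. Then for every hypothesis h ∈ ℋ: Σ_{c=1}^{t} R(h, D̃_c) ≤ Σ_{c=1}^{t} R'(h, g_c, μ_c) + Σ_{c=1}^{t} ( Ψ(μ_c, μ̃_c) + ε_c ), where ε_c = R(g_c, D̃_c) + R'(g_c, g_c, μ_c). (This is the paper's risk bound for the mixture model L-MVAE: because each task is assigned to a single expert whose parameters are then frozen, each task's generated distribution D̃_c is produced by only one round of training, so the accumulated risk over t tasks involves a single discrepancy term per task and does not grow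 with repeated retraining, giving a smaller upper bound than the single-model generative-replay bound.) -/
open MeasureTheory

/-- **Risk bound for the L-MVAE mixture model.** Each task `c = 1, …, t` has a
true distribution `D_c` (marginal `μ_c`, labeling hypothesis `g_c` with
`y = g_c(x)` `D_c`-a.e.) and a generated distribution `D̃_c` (marginal `μ̃_c`)
produced by a single round of training of the expert assigned to task `c`.
Then for every `h ∈ ℋ`:
`∑_c R(h, D̃_c) ≤ ∑_c R'(h, g_c, μ_c) + ∑_c (Ψ(μ_c, μ̃_c) + ε_c)`, where
`ε_c = R(g_c, D̃_c) + R'(g_c, g_c, μ_c)`. -/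
theorem mixture_accumulated_risk_bound
    {X Y : Type*} [MeasurableSpace X] [MeasurableSpace Y]
    (f : Y → Y → ℝ) (M : ℝ) (hM : 0 < M)
    (hf_meas : Measurable (Function.uncurry f))
    (hf_nonneg : ∀ y y', 0 ≤ f y y') (hf_bdd : ∀ y y', f y y' ≤ M)
    (hf_tri : ∀ y y' y'', f y y'' ≤ f y y' + f y' y'')
    (H : Set (X → Y)) (hH_meas : ∀ g ∈ H, Measurable g)
    (t : ℕ) (ht : 1 ≤ t)
    (D Dtilde : ℕ → Measure (X × Y))
    (hD_prob : ∀ c ∈ Finset.Icc 1 t, IsProbabilityMeasure (D c))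
    (hDtilde_prob : ∀ c ∈ Finset.Icc 1 t, IsProbabilityMeasure (Dtilde c))
    (μ μtilde : ℕ → Measure X)
    (hμ : ∀ c ∈ Finset.Icc 1 t, μ c = (D c).map Prod.fst)
    (hμtilde : ∀ c ∈ Finset.Icc 1 t, μtilde c = (Dtilde c).map Prod.fst)
    (g : ℕ → X → Y) (hg : ∀ c ∈ Finset.Icc 1 t, g c ∈ H)
    (hlabel : ∀ c ∈ Finset.Icc 1 t, ∀ᵐ p ∂(D c), p.2 = g c p.1)
    (h : X → Y) (hh : h ∈ H) :
    ∑ c ∈ Finset.Icc 1 t, risk f h (Dtilde c) ≤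
      ∑ c ∈ Finset.Icc 1 t, pseudoRisk f h (g c) (μ c) +
        ∑ c ∈ Finset.Icc 1 t,
          (discrepancy f H (μ c) (μtilde c) +
            (risk f (g c) (Dtilde c) + pseudoRisk f (g c) (g c) (μ c))) := by

  rw [← Finset.sum_add_distrib]
  apply Finset.sum_le_sum
  intro c hc
  haveI hDtc := hDtilde_prob c hc
  have hgc := hg c hc
  have hgm := hH_meas _ hgc
  have hhm := hH_meas _ hh
  have hμc : μ c = (D c).map Prod.fst := hμ c hc
  have hμtc : μtilde c = (Dtilde c).map Prod.fst := hμtilde c hc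
  haveI hDc := hD_prob c hc
  haveI : IsProbabilityMeasure (μ c) := by
    rw [hμc]; exact Measure.isProbabilityMeasure_map measurable_fst.aemeasurable
  haveI : IsProbabilityMeasure (μtilde c) := by
    rw [hμtc]; exact Measure.isProbabilityMeasure_map measurable_fst.aemeasurable
  -- boundedness of pseudoRisk
  have pr_bound : ∀ (ν : Measure X), IsProbabilityMeasure ν → ∀ (a b : X → Y),
      |pseudoRisk f a b ν| ≤ M := by
    intro ν hν a b
    have := norm_integral_le_of_norm_le_const (μ := ν) (C := M)
      (f := fun x => f (a x) (b x))
      (Filter.Eventually.of_forall fun x => by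
        rw [Real.norm_eq_abs, abs_of_nonneg (hf_nonneg _ _)]; exact hf_bdd _ _)
    simpa [pseudoRisk, Real.norm_eq_abs, measure_univ] using this
  -- integrability helper
  have int_of : ∀ (F : X × Y → ℝ), Measurable F → (∀ x, 0 ≤ F x) →
      (∀ x, F x ≤ M) → Integrable F (Dtilde c) := by
    intro F hFm hF0 hFM
    exact (integrable_const M).mono' hFm.aestronglyMeasurable
      (Filter.Eventually.of_forall fun x => by
        rw [Real.norm_eq_abs, abs_of_nonneg (hF0 x)]; exact hFM x)
  have m1 : Measurable fun p : X × Y => f (h p.1) p.2 :=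
    hf_meas.comp ((hhm.comp measurable_fst).prodMk measurable_snd)
  have m2 : Measurable fun p : X × Y => f (h p.1) (g c p.1) :=
    hf_meas.comp ((hhm.comp measurable_fst).prodMk (hgm.comp measurable_fst))
  have m3 : Measurable fun p : X × Y => f (g c p.1) p.2 :=
    hf_meas.comp ((hgm.comp measurable_fst).prodMk measurable_snd)
  have m4 : Measurable fun x : X => f (h x) (g c x) :=
    hf_meas.comp (hhm.prodMk hgm)
  -- step 1: triangle inequality
  have step1 : risk f h (Dtilde c) ≤
      pseudoRisk f h (g c) (μtilde c) + risk f (g c) (Dtilde c) := by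
    have hint2 := int_of (fun p : X × Y => f (h p.1) (g c p.1)) m2 (fun p => hf_nonneg _ _)
      (fun p => hf_bdd _ _)
    have hint3 := int_of (fun p : X × Y => f (g c p.1) p.2) m3 (fun p => hf_nonneg _ _)
      (fun p => hf_bdd _ _)
    have hle : risk f h (Dtilde c) ≤
        ∫ p, (f (h p.1) (g c p.1) + f (g c p.1) p.2) ∂(Dtilde c) := by
      refine integral_mono (int_of (fun p : X × Y => f (h p.1) p.2) m1
        (fun p => hf_nonneg _ _) (fun p => hf_bdd _ _)) (hint2.add hint3) ?_
      intro p; exact hf_tri _ _ _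
    rw [integral_add hint2 hint3] at hle
    have hmap : ∫ p, f (h p.1) (g c p.1) ∂(Dtilde c)
        = pseudoRisk f h (g c) (μtilde c) := by
      rw [hμtc, pseudoRisk,
        integral_map measurable_fst.aemeasurable m4.aestronglyMeasurable]
    rw [hmap] at hle
    exact hle
  -- step 2: discrepancy bound
  have step2 : pseudoRisk f h (g c) (μtilde c) ≤
      pseudoRisk f h (g c) (μ c) + discrepancy f H (μ c) (μtilde c) := by
    have hmem : |pseudoRisk f h (g c) (μ c) - pseudoRisk f h (g c) (μtilde c)| ∈
        {r | ∃ a ∈ H, ∃ b ∈ H, r = |pseudoRisk f a b (μ c) - pseudoRisk f a b (μtilde c)|} :=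
      ⟨h, hh, g c, hgc, rfl⟩
    have hbdd : BddAbove
        {r | ∃ a ∈ H, ∃ b ∈ H, r = |pseudoRisk f a b (μ c) - pseudoRisk f a b (μtilde c)|} := by
      refine ⟨2 * M, ?_⟩
      rintro r ⟨a, ha, b, hb, rfl⟩
      calc |pseudoRisk f a b (μ c) - pseudoRisk f a b (μtilde c)|
          ≤ |pseudoRisk f a b (μ c)| + |pseudoRisk f a b (μtilde c)| := abs_sub _ _
        _ ≤ M + M := add_le_add (pr_bound _ inferInstance a b) (pr_bound _ inferInstance a b)
        _ = 2 * M := by ring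
    have hle := le_csSup hbdd hmem
    have : pseudoRisk f h (g c) (μtilde c) - pseudoRisk f h (g c) (μ c) ≤
        discrepancy f H (μ c) (μtilde c) := by
      refine le_trans ?_ hle
      rw [abs_sub_comm]
      exact le_abs_self _
    linarith
  -- step 3: nonnegativity of the self pseudo-risk
  have step3 : 0 ≤ pseudoRisk f (g c) (g c) (μ c) :=
    integral_nonneg fun x => hf_nonneg _ _
  linarith
end
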